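/- arXiv:1902.02583 — 5 statements merged into one kernel-verified Lean document; each statement's English description precedes it below -/
import Mathlib

section
/- Let S be an inverse semigroup and A a filter in S. Then d(A) := (A⁻¹A)↑ and r(A) := (AA⁻¹)↑ are filters, and A is proper if and only if d(A) is proper. -/
/-- An inverse semigroup with zero: associative multiplication, unique
generalized inverses, and a multiplicatively absorbing zero. -/
structure InvSemigroupZero (S : Type*) [Mul S] [Inv S] [Zero S] : Prop where
  mul_assoc : ∀ a b c : S, a * b * c = a * (b * c)
  mul_inv_mul : ∀ a : S, a * a⁻¹ * a = a
  inv_mul_inv : ∀ a : S, a⁻¹ * a * a⁻¹ = a⁻¹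
  inv_unique : ∀ a t : S, a * t * a = a → t * a * t = t → t = a⁻¹
  zero_mul : ∀ a : S, 0 * a = 0
  mul_zero : ∀ a : S, a * 0 = 0

def IsIdem {S : Type*} [Mul S] (e : S) : Prop := e * e = e

/-- The natural partial order: `s ≤ t` iff `s = t e` for some idempotent `e`. -/
def natLe {S : Type*} [Mul S] (s t : S) : Prop := ∃ e : S, IsIdem e ∧ s = t * e

/-- `s` and `t` are compatible iff `s⁻¹ t` and `s t⁻¹` are idempotents. -/
def Compat {S : Type*} [Mul S] [Inv S] (s t : S) : Prop :=
  IsIdem (s⁻¹ * t) ∧ IsIdem (s * t⁻¹)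

/-- Upward closure of a subset in the natural partial order. -/
def upc {S : Type*} [Mul S] (X : Set S) : Set S := {s | ∃ x ∈ X, natLe x s}

/-- A filter: nonempty, upward closed and downward directed. -/
def IsFilt {S : Type*} [Mul S] (A : Set S) : Prop :=
  A.Nonempty ∧ (∀ a ∈ A, ∀ s, natLe a s → s ∈ A) ∧
    ∀ a ∈ A, ∀ b ∈ A, ∃ c ∈ A, natLe c a ∧ natLe c b

/-- A proper filter: a filter not containing `0`. -/
def IsPFilt {S : Type*} [Mul S] [Zero S] (A : Set S) : Prop := IsFilt A ∧ (0 : S) ∉ A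

def dF {S : Type*} [Mul S] [Inv S] (A : Set S) : Set S :=
  upc {p | ∃ a ∈ A, ∃ b ∈ A, p = a⁻¹ * b}

def rF {S : Type*} [Mul S] [Inv S] (A : Set S) : Set S :=
  upc {p | ∃ a ∈ A, ∃ b ∈ A, p = a * b⁻¹}

def invF {S : Type*} [Inv S] (A : Set S) : Set S := Inv.inv '' A

def mulF {S : Type*} [Mul S] (A B : Set S) : Set S :=
  upc {p | ∃ a ∈ A, ∃ b ∈ B, p = a * b}

/-- An ultrafilter: a maximal proper filter. -/
def IsUltraF {S : Type*} [Mul S] [Zero S] (A : Set S) : Prop :=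
  IsPFilt A ∧ ∀ B : Set S, IsPFilt B → A ⊆ B → A = B

/-!
Since `A` is downward directed and inversion and multiplication are monotone for the natural
order, every `a⁻¹ b` with `a, b ∈ A` lies above some `c⁻¹ c` with `c ∈ A`; so `d(A)` is the
upward closure of the directed set `{c⁻¹ c | c ∈ A}`, and symmetrically for `r(A)`. As `0` is
the least element, `0 ∈ d(A)` iff `c⁻¹ c = 0` for some `c ∈ A`, i.e. iff `c = c c⁻¹ c = 0 ∈ A`.
-/

namespace InvSemigroupZero

variable {S : Type*} [Mul S] [Inv S] [Zero S] (hS : InvSemigroupZero S)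
include hS

lemma inv_eq_of_isIdem {e : S} (he : IsIdem e) : e⁻¹ = e :=
  (hS.inv_unique e e (by rw [he, he]) (by rw [he, he])).symm

lemma isIdem_mul_inv_self (a : S) : IsIdem (a * a⁻¹) := by
  rw [IsIdem, ← hS.mul_assoc, hS.mul_inv_mul]

lemma isIdem_inv_mul_self (a : S) : IsIdem (a⁻¹ * a) := by
  rw [IsIdem, ← hS.mul_assoc, hS.inv_mul_inv]

/-- The inverse `x` of `e f` satisfies `x = f x e`, which makes `x` idempotent; hence
`e f = x⁻¹ = x`. -/
lemma isIdem_mul {e f : S} (he : IsIdem e) (hf : IsIdem f) : IsIdem (e * f) := by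
  set x := (e * f)⁻¹
  have hx₁ : e * f * x * (e * f) = e * f := hS.mul_inv_mul (e * f)
  have hx₂ : x * (e * f) * x = x := hS.inv_mul_inv (e * f)
  have hfxe : f * (x * e) = x := by
    refine hS.inv_unique (e * f) (f * (x * e)) ?_ ?_
    · calc e * f * (f * (x * e)) * (e * f)
          = e * (f * f) * x * (e * e) * f := by simp only [hS.mul_assoc]
        _ = e * f * x * (e * f) := by rw [he, hf]; simp only [hS.mul_assoc]
        _ = e * f := hx₁
    · calc f * (x * e) * (e * f) * (f * (x * e))
          = f * (x * (e * e) * (f * f) * (x * e)) := by simp only [hS.mul_assoc]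
        _ = f * (x * (e * f) * x * e) := by rw [he, hf]; simp only [hS.mul_assoc]
        _ = f * (x * e) := by rw [hx₂]
  have hx : IsIdem x := by
    calc x * x = f * (x * e) * (f * (x * e)) := by rw [hfxe]
      _ = f * (x * (e * f) * x * e) := by simp only [hS.mul_assoc]
      _ = x := by rw [hx₂, hfxe]
  have hef : e * f = x⁻¹ := hS.inv_unique x (e * f) (by rw [hx₂]) (by rw [hx₁])
  rw [IsIdem, hef, hS.inv_eq_of_isIdem hx, hx]

lemma idem_mul_comm {e f : S} (he : IsIdem e) (hf : IsIdem f) : e * f = f * e := by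
  have hfe : f * e = (e * f)⁻¹ := by
    refine hS.inv_unique (e * f) (f * e) ?_ ?_
    · calc e * f * (f * e) * (e * f) = e * (f * f) * (e * e) * f := by simp only [hS.mul_assoc]
        _ = e * f * (e * f) := by rw [he, hf]; simp only [hS.mul_assoc]
        _ = e * f := hS.isIdem_mul he hf
    · calc f * e * (e * f) * (f * e) = f * (e * e) * (f * f) * e := by simp only [hS.mul_assoc]
        _ = f * e * (f * e) := by rw [he, hf]; simp only [hS.mul_assoc]
        _ = f * e := hS.isIdem_mul hf he
  rw [hfe, hS.inv_eq_of_isIdem (hS.isIdem_mul he hf)]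

lemma mul_inv_rev (a b : S) : (a * b)⁻¹ = b⁻¹ * a⁻¹ := by
  have hcomm := hS.idem_mul_comm (hS.isIdem_mul_inv_self b) (hS.isIdem_inv_mul_self a)
  refine (hS.inv_unique (a * b) (b⁻¹ * a⁻¹) ?_ ?_).symm
  · calc a * b * (b⁻¹ * a⁻¹) * (a * b)
        = a * (b * b⁻¹ * (a⁻¹ * a)) * b := by simp only [hS.mul_assoc]
      _ = a * a⁻¹ * a * (b * b⁻¹ * b) := by rw [hcomm]; simp only [hS.mul_assoc]
      _ = a * b := by rw [hS.mul_inv_mul, hS.mul_inv_mul]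
  · calc b⁻¹ * a⁻¹ * (a * b) * (b⁻¹ * a⁻¹)
        = b⁻¹ * (a⁻¹ * a * (b * b⁻¹)) * a⁻¹ := by simp only [hS.mul_assoc]
      _ = b⁻¹ * b * b⁻¹ * (a⁻¹ * a * a⁻¹) := by rw [← hcomm]; simp only [hS.mul_assoc]
      _ = b⁻¹ * a⁻¹ := by rw [hS.inv_mul_inv, hS.inv_mul_inv]

lemma eq_zero_of_inv_mul_self_eq_zero {a : S} (h : a⁻¹ * a = 0) : a = 0 := by
  rw [← hS.mul_inv_mul a, hS.mul_assoc, h, hS.mul_zero]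

lemma natLe_refl (s : S) : natLe s s :=
  ⟨s⁻¹ * s, hS.isIdem_inv_mul_self s, by rw [← hS.mul_assoc, hS.mul_inv_mul]⟩

lemma natLe_trans {s t u : S} (hst : natLe s t) (htu : natLe t u) : natLe s u := by
  obtain ⟨e, he, rfl⟩ := hst
  obtain ⟨f, hf, rfl⟩ := htu
  exact ⟨f * e, hS.isIdem_mul hf he, hS.mul_assoc u f e⟩

lemma eq_zero_of_natLe_zero {s : S} (h : natLe s 0) : s = 0 := by
  obtain ⟨e, -, rfl⟩ := h
  exact hS.zero_mul e

lemma idem_mul_natLe {f : S} (hf : IsIdem f) (t : S) : natLe (f * t) t := by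
  have hcomm := hS.idem_mul_comm hf (hS.isIdem_mul_inv_self t)
  refine ⟨t⁻¹ * (f * t), ?_, ?_⟩
  · calc t⁻¹ * (f * t) * (t⁻¹ * (f * t)) = t⁻¹ * (f * (t * t⁻¹ * f) * t) := by
          simp only [hS.mul_assoc]
      _ = t⁻¹ * (f * f * (t * t⁻¹ * t)) := by rw [← hcomm]; simp only [hS.mul_assoc]
      _ = t⁻¹ * (f * t) := by rw [hf, hS.mul_inv_mul]
  · calc f * t = f * (t * t⁻¹) * t := by rw [hS.mul_assoc, hS.mul_inv_mul]
      _ = t * (t⁻¹ * (f * t)) := by rw [hcomm]; simp only [hS.mul_assoc]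

lemma exists_idem_mul_eq_of_natLe {s t : S} (h : natLe s t) : ∃ f, IsIdem f ∧ s = f * t := by
  obtain ⟨e, he, rfl⟩ := h
  have hcomm := hS.idem_mul_comm (hS.isIdem_inv_mul_self t) he
  refine ⟨t * e * t⁻¹, ?_, ?_⟩
  · calc t * e * t⁻¹ * (t * e * t⁻¹) = t * (e * (t⁻¹ * t) * e) * t⁻¹ := by
          simp only [hS.mul_assoc]
      _ = t * t⁻¹ * t * (e * e) * t⁻¹ := by rw [← hcomm]; simp only [hS.mul_assoc]
      _ = t * e * t⁻¹ := by rw [hS.mul_inv_mul, he]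
  · calc t * e = t * (t⁻¹ * t * e) := by rw [← hS.mul_assoc, ← hS.mul_assoc, hS.mul_inv_mul]
      _ = t * e * t⁻¹ * t := by rw [hcomm]; simp only [hS.mul_assoc]

lemma natLe_inv {s t : S} (h : natLe s t) : natLe s⁻¹ t⁻¹ := by
  obtain ⟨e, he, rfl⟩ := h
  rw [hS.mul_inv_rev, hS.inv_eq_of_isIdem he]
  exact hS.idem_mul_natLe he _

lemma natLe_mul {s t u v : S} (hst : natLe s t) (huv : natLe u v) :
    natLe (s * u) (t * v) := by
  obtain ⟨f, hf, rfl⟩ := hS.exists_idem_mul_eq_of_natLe hst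
  obtain ⟨e, he, rfl⟩ := huv
  have hassoc : f * t * (v * e) = f * (t * v * e) := by rw [hS.mul_assoc, hS.mul_assoc]
  rw [hassoc]
  exact hS.natLe_trans (hS.idem_mul_natLe hf _) ⟨e, he, rfl⟩

lemma mem_upc_of_natLe {X : Set S} {s t : S} (hs : s ∈ upc X) (hst : natLe s t) :
    t ∈ upc X := by
  obtain ⟨x, hx, hxs⟩ := hs
  exact ⟨x, hx, hS.natLe_trans hxs hst⟩

lemma zero_mem_upc_iff {X : Set S} : (0 : S) ∈ upc X ↔ (0 : S) ∈ X := by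
  constructor
  · rintro ⟨x, hx, hx0⟩
    rwa [← hS.eq_zero_of_natLe_zero hx0]
  · exact fun h0 => ⟨0, h0, hS.natLe_refl 0⟩

/-- The third clause of `IsFilt` is `DirectedOn` for the reversed natural order. -/
lemma isFilt_upc {X : Set S} (hne : X.Nonempty) (hdir : DirectedOn (fun x y => natLe y x) X) :
    IsFilt (upc X) := by
  refine ⟨hne.mono fun x hx => ⟨x, hx, hS.natLe_refl x⟩,
    fun s hs t hst => hS.mem_upc_of_natLe hs hst, ?_⟩
  rintro s ⟨x, hx, hxs⟩ t ⟨y, hy, hyt⟩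
  obtain ⟨z, hz, hzx, hzy⟩ := hdir x hx y hy
  exact ⟨z, ⟨z, hz, hS.natLe_refl z⟩, hS.natLe_trans hzx hxs, hS.natLe_trans hzy hyt⟩

section Diagonal

variable {f : S → S → S}
  (hf : ∀ ⦃a a' b b' : S⦄, natLe a a' → natLe b b' → natLe (f a b) (f a' b'))
include hf

lemma upc_image2_eq_upc_diag {A : Set S} (hA : DirectedOn (fun x y => natLe y x) A) :
    upc {p | ∃ a ∈ A, ∃ b ∈ A, p = f a b} = upc ((fun c => f c c) '' A) := by
  ext s
  constructor
  · rintro ⟨_, ⟨a, ha, b, hb, rfl⟩, hs⟩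
    obtain ⟨c, hc, hca, hcb⟩ := hA a ha b hb
    exact ⟨f c c, ⟨c, hc, rfl⟩, hS.natLe_trans (hf hca hcb) hs⟩
  · rintro ⟨_, ⟨c, hc, rfl⟩, hs⟩
    exact ⟨f c c, ⟨c, hc, c, hc, rfl⟩, hs⟩

lemma isFilt_upc_image2 {A : Set S} (hA : IsFilt A) :
    IsFilt (upc {p | ∃ a ∈ A, ∃ b ∈ A, p = f a b}) := by
  have hdir : DirectedOn (fun x y => natLe y x) A := hA.2.2
  rw [hS.upc_image2_eq_upc_diag hf hdir]
  exact hS.isFilt_upc (hA.1.image _) (hdir.mono_comp fun _ _ h => hf h h)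

end Diagonal

lemma natLe_inv_mul ⦃a a' b b' : S⦄ (ha : natLe a a') (hb : natLe b b') :
    natLe (a⁻¹ * b) (a'⁻¹ * b') :=
  hS.natLe_mul (hS.natLe_inv ha) hb

lemma natLe_mul_inv ⦃a a' b b' : S⦄ (ha : natLe a a') (hb : natLe b b') :
    natLe (a * b⁻¹) (a' * b'⁻¹) :=
  hS.natLe_mul ha (hS.natLe_inv hb)

lemma zero_mem_dF_iff {A : Set S} (hA : DirectedOn (fun x y => natLe y x) A) :
    (0 : S) ∈ dF A ↔ (0 : S) ∈ A := by
  rw [dF, hS.upc_image2_eq_upc_diag (f := fun a b => a⁻¹ * b) hS.natLe_inv_mul hA,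
    hS.zero_mem_upc_iff]
  constructor
  · rintro ⟨c, hc, hc0⟩
    rwa [← hS.eq_zero_of_inv_mul_self_eq_zero hc0]
  · exact fun h0 => ⟨0, h0, hS.mul_zero _⟩

end InvSemigroupZero

/-- For a filter `A`, both `d(A) = (A⁻¹A)↑` and `r(A) = (AA⁻¹)↑` are filters,
and `A` is proper iff `d(A)` is proper. -/
theorem dF_rF_are_filters {S : Type*} [Mul S] [Inv S] [Zero S]
    (hS : InvSemigroupZero S) (A : Set S) (hA : IsFilt A) :
    IsFilt (dF A) ∧ IsFilt (rF A) ∧ (IsPFilt A ↔ IsPFilt (dF A)) := by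
  have hdF : IsFilt (dF A) := hS.isFilt_upc_image2 (f := fun a b => a⁻¹ * b) hS.natLe_inv_mul hA
  have hrF : IsFilt (rF A) := hS.isFilt_upc_image2 (f := fun a b => a * b⁻¹) hS.natLe_mul_inv hA
  refine ⟨hdF, hrF, ?_⟩
  rw [IsPFilt, IsPFilt, hS.zero_mem_dF_iff hA.2.2]
  exact ⟨fun h => ⟨hdF, h.2⟩, fun h => ⟨hA, h.2⟩⟩
end

section
/- Let S be an inverse semigroup and A a proper filter in S. Then for each a ∈ A, A = (a·d(A))↑, where d(A) = (A⁻¹A)↑. -/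
class IsInverseSemigroup (S : Type*) [Semigroup S] [Inv S] : Prop where
  mul_inv_mul : ∀ a : S, a * a⁻¹ * a = a
  inv_mul_inv : ∀ a : S, a⁻¹ * a * a⁻¹ = a⁻¹
  inv_unique : ∀ a t : S, a * t * a = a → t * a * t = t → t = a⁻¹

abbrev InvSemigroupZero.toSemigroup {S : Type*} [Mul S] [Inv S] [Zero S]
    (hS : InvSemigroupZero S) : Semigroup S where
  mul_assoc := hS.mul_assoc

theorem InvSemigroupZero.isInverseSemigroup {S : Type*} [Mul S] [Inv S] [Zero S]
    (hS : InvSemigroupZero S) : @IsInverseSemigroup S hS.toSemigroup _ :=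
  @IsInverseSemigroup.mk S hS.toSemigroup _ hS.mul_inv_mul hS.inv_mul_inv hS.inv_unique

theorem IsIdem.mul_self_mul {S : Type*} [Semigroup S] {e : S} (he : IsIdem e) (x : S) :
    e * (e * x) = e * x := by
  rw [← mul_assoc, he]

theorem natLe_mul_left {S : Type*} [Semigroup S] {s t : S} (x : S) :
    natLe s t → natLe (x * s) (x * t) := by
  rintro ⟨e, he, rfl⟩
  exact ⟨e, he, (mul_assoc x t e).symm⟩

namespace IsInverseSemigroup

variable {S : Type*} [Semigroup S] [Inv S] [IsInverseSemigroup S]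

protected theorem inv_inv (a : S) : a⁻¹⁻¹ = a :=
  (inv_unique a⁻¹ a (inv_mul_inv a) (mul_inv_mul a)).symm

theorem inv_eq_self_of_isIdem {e : S} (he : IsIdem e) : e⁻¹ = e :=
  (inv_unique e e (by rw [he, he]) (by rw [he, he])).symm

theorem isIdem_mul_inv_self (a : S) : IsIdem (a * a⁻¹) := by
  rw [IsIdem, mul_assoc, ← mul_assoc a⁻¹, inv_mul_inv]

theorem isIdem_inv_mul_self (a : S) : IsIdem (a⁻¹ * a) := by
  rw [IsIdem, mul_assoc, ← mul_assoc a, mul_inv_mul]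

/-- With `b = (e f)⁻¹`, the element `f b e` is also an inverse of `e f`, hence equals `b`;
this makes `b` idempotent, and so is its inverse `e f`. -/
theorem isIdem_mul {e f : S} (he : IsIdem e) (hf : IsIdem f) : IsIdem (e * f) := by
  set b := (e * f)⁻¹
  have hb : f * b * e = b := by
    refine inv_unique (e * f) (f * b * e) ?_ ?_
    · calc e * f * (f * b * e) * (e * f) = e * f * b * (e * f) := by
            simp only [mul_assoc, he.mul_self_mul, hf.mul_self_mul]
        _ = e * f := mul_inv_mul _
    · calc f * b * e * (e * f) * (f * b * e) = f * (b * (e * f) * b) * e := by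
            simp only [mul_assoc, he.mul_self_mul, hf.mul_self_mul]
        _ = f * b * e := by rw [inv_mul_inv]
  have hbb : IsIdem b :=
    calc b * b = f * b * e * (f * b * e) := by rw [hb]
      _ = f * (b * (e * f) * b) * e := by simp only [mul_assoc]
      _ = b := by rw [inv_mul_inv, hb]
  rw [← IsInverseSemigroup.inv_inv (e * f), inv_eq_self_of_isIdem hbb]
  exact hbb

theorem isIdem_comm {e f : S} (he : IsIdem e) (hf : IsIdem f) : e * f = f * e := by
  have hef := isIdem_mul he hf
  refine (inv_unique (e * f) (f * e) ?_ ?_).trans (inv_eq_self_of_isIdem hef) |>.symm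
  · calc e * f * (f * e) * (e * f) = e * f * (e * f) := by
          simp only [mul_assoc, he.mul_self_mul, hf.mul_self_mul]
      _ = e * f := hef
  · calc f * e * (e * f) * (f * e) = f * e * (f * e) := by
          simp only [mul_assoc, he.mul_self_mul, hf.mul_self_mul]
      _ = f * e := isIdem_mul hf he

protected theorem mul_inv_rev (a b : S) : (a * b)⁻¹ = b⁻¹ * a⁻¹ := by
  have hc := isIdem_comm (isIdem_mul_inv_self b) (isIdem_inv_mul_self a)
  refine (inv_unique (a * b) (b⁻¹ * a⁻¹) ?_ ?_).symm
  · calc a * b * (b⁻¹ * a⁻¹) * (a * b) = a * (b * b⁻¹ * (a⁻¹ * a)) * b := by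
          simp only [mul_assoc]
      _ = a * a⁻¹ * a * (b * b⁻¹ * b) := by rw [hc]; simp only [mul_assoc]
      _ = a * b := by rw [mul_inv_mul, mul_inv_mul]
  · calc b⁻¹ * a⁻¹ * (a * b) * (b⁻¹ * a⁻¹) = b⁻¹ * (a⁻¹ * a * (b * b⁻¹)) * a⁻¹ := by
          simp only [mul_assoc]
      _ = b⁻¹ * b * b⁻¹ * (a⁻¹ * a * a⁻¹) := by rw [← hc]; simp only [mul_assoc]
      _ = b⁻¹ * a⁻¹ := by rw [inv_mul_inv, inv_mul_inv]

theorem natLe_refl (a : S) : natLe a a :=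
  ⟨a⁻¹ * a, isIdem_inv_mul_self a, by rw [← mul_assoc, mul_inv_mul]⟩

theorem natLe_trans {s t u : S} : natLe s t → natLe t u → natLe s u := by
  rintro ⟨e, he, rfl⟩ ⟨f, hf, rfl⟩
  exact ⟨f * e, isIdem_mul hf he, mul_assoc u f e⟩

/-- The witness is the conjugate `t⁻¹ f t`: it is idempotent and `f t = t (t⁻¹ f t)` because
`f` commutes with `t t⁻¹`. -/
theorem idem_mul_natLe {f : S} (hf : IsIdem f) (t : S) : natLe (f * t) t := by
  have hc := isIdem_comm (isIdem_mul_inv_self t) hf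
  refine ⟨t⁻¹ * f * t, ?_, ?_⟩
  · calc t⁻¹ * f * t * (t⁻¹ * f * t) = t⁻¹ * (f * (t * t⁻¹)) * f * t := by simp only [mul_assoc]
      _ = t⁻¹ * t * t⁻¹ * (f * f) * t := by rw [← hc]; simp only [mul_assoc]
      _ = t⁻¹ * f * t := by rw [inv_mul_inv, hf]
  · calc f * t = f * (t * t⁻¹) * t := by rw [mul_assoc, mul_inv_mul]
      _ = t * (t⁻¹ * f * t) := by rw [← hc]; simp only [mul_assoc]

theorem natLe_mul_right {s t : S} (x : S) : natLe s t → natLe (s * x) (t * x) := by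
  rintro ⟨e, he, rfl⟩
  obtain ⟨g, hg, hex⟩ := idem_mul_natLe he x
  exact ⟨g, hg, by rw [mul_assoc, hex, mul_assoc]⟩

theorem natLe_mul {s t s' t' : S} (h : natLe s t) (h' : natLe s' t') : natLe (s * s') (t * t') :=
  natLe_trans (natLe_mul_right s' h) (natLe_mul_left t h')

theorem natLe_inv {s t : S} : natLe s t → natLe s⁻¹ t⁻¹ := by
  rintro ⟨e, he, rfl⟩
  rw [IsInverseSemigroup.mul_inv_rev, inv_eq_self_of_isIdem he]
  exact idem_mul_natLe he t⁻¹

theorem _root_.IsFilt.mul_inv_mul_mem {A : Set S} (hA : IsFilt A) {a b c : S} (ha : a ∈ A)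
    (hb : b ∈ A) (hc : c ∈ A) : a * b⁻¹ * c ∈ A := by
  obtain ⟨-, hup, hdir⟩ := hA
  obtain ⟨d, hd, hda, hdb⟩ := hdir a ha b hb
  obtain ⟨u, hu, hud, huc⟩ := hdir d hd c hc
  have hle : natLe (u * u⁻¹ * u) (a * b⁻¹ * c) :=
    natLe_mul (natLe_mul (natLe_trans hud hda) (natLe_inv (natLe_trans hud hdb))) huc
  rw [mul_inv_mul] at hle
  exact hup u hu _ hle

end IsInverseSemigroup

open IsInverseSemigroup in
/-- For a proper filter `A` and `a ∈ A`, we have `A = (a · d(A))↑`. -/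
theorem proper_filter_eq_up_mul_dF {S : Type*} [Mul S] [Inv S] [Zero S]
    (hS : InvSemigroupZero S) (A : Set S) (hA : IsPFilt A) (a : S) (ha : a ∈ A) :
    A = upc {x | ∃ y ∈ dF A, x = a * y} := by
  let _ := hS.toSemigroup
  have _ := hS.isInverseSemigroup
  obtain ⟨hF, -⟩ := hA
  ext s
  constructor
  · intro hs
    refine ⟨a * (a⁻¹ * s), ⟨a⁻¹ * s, ⟨a⁻¹ * s, ⟨a, ha, s, hs, rfl⟩, natLe_refl _⟩, rfl⟩, ?_⟩
    rw [← mul_assoc]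
    exact idem_mul_natLe (isIdem_mul_inv_self a) s
  · rintro ⟨_, ⟨y, ⟨_, ⟨b, hb, c, hc, rfl⟩, hy⟩, rfl⟩, hs⟩
    refine hF.2.1 (a * (b⁻¹ * c)) ?_ s (natLe_trans (natLe_mul_left a hy) hs)
    rw [← mul_assoc]
    exact hF.mul_inv_mul_mem ha hb hc
end

section
/- Let G be a groupoid. The set L(G) of all partial bisections of G, under setwise multiplication, is a Boolean inverse semigroup in which the natural partial order coincides with subset inclusion. -/
/-- A Boolean inverse semigroup: an inverse semigroup with zero in which `⊔`
gives the join of any compatible pair, multiplication distributes over such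
joins, and `\` gives relative complements (so the idempotents form a
generalized Boolean algebra). -/
structure BooleanInvSemigroup (S : Type*) [Mul S] [Inv S] [Zero S] [Max S] [SDiff S] :
    Prop where
  toInvSemigroupZero : InvSemigroupZero S
  le_sup_left : ∀ a b : S, Compat a b → natLe a (a ⊔ b)
  le_sup_right : ∀ a b : S, Compat a b → natLe b (a ⊔ b)
  sup_le : ∀ a b c : S, Compat a b → natLe a c → natLe b c → natLe (a ⊔ b) c
  mul_sup : ∀ a b c : S, Compat b c → a * (b ⊔ c) = (a * b) ⊔ (a * c)
  sup_mul : ∀ a b c : S, Compat a b → (a ⊔ b) * c = (a * c) ⊔ (b * c)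
  sdiff_le : ∀ a c : S, natLe c a → natLe (a \ c) a
  sdiff_orth : ∀ a c : S, natLe c a → c⁻¹ * (a \ c) = 0 ∧ c * (a \ c)⁻¹ = 0
  sup_sdiff : ∀ a c : S, natLe c a → c ⊔ (a \ c) = a

def dd {S : Type*} [Mul S] [Inv S] (a : S) : S := a⁻¹ * a
def rr {S : Type*} [Mul S] [Inv S] (a : S) : S := a * a⁻¹

/-- The (left) skew difference `a ⊖ b = f a e` where `e = d(a) \ d(a)d(b)` and
`f = r(b) \ r(a)r(b)`. -/
def skewDiff {S : Type*} [Mul S] [Inv S] [SDiff S] (a b : S) : S :=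
  (rr b \ (rr a * rr b)) * a * (dd a \ (dd a * dd b))

/-- The (left) skew join `a ▽ b = (a ⊖ b) ∨ b`. -/
def skewJoin {S : Type*} [Mul S] [Inv S] [SDiff S] [Max S] (a b : S) : S :=
  skewDiff a b ⊔ b

open CategoryTheory

/-- The arrows of a groupoid `C`. -/
abbrev Arr (C : Type*) [Groupoid C] := Σ a b : C, a ⟶ b

/-- Pointwise inverse of a set of arrows. -/
def invArrSet {C : Type*} [Groupoid C] (X : Set (Arr C)) : Set (Arr C) :=
  (fun x : Arr C => (⟨x.2.1, x.1, Groupoid.inv x.2.2⟩ : Arr C)) '' X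

/-- Setwise multiplication: all defined composites `x y` with `x ∈ X`, `y ∈ Y`. -/
def mulArrSet {C : Type*} [Groupoid C] (X Y : Set (Arr C)) : Set (Arr C) :=
  {z | ∃ x ∈ X, ∃ y ∈ Y, ∃ h : x.2.1 = y.1,
        z = ⟨x.1, y.2.1, x.2.2 ≫ eqToHom h ≫ y.2.2⟩}

/-- A partial bisection: distinct arrows have distinct domains and distinct
ranges. -/
def IsPB {C : Type*} [Groupoid C] (X : Set (Arr C)) : Prop :=
  (∀ x ∈ X, ∀ y ∈ X, x.1 = y.1 → x = y) ∧
    ∀ x ∈ X, ∀ y ∈ X, x.2.1 = y.2.1 → x = y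

/-- The set `L(G)` of partial bisections of the groupoid. -/
def PB (C : Type*) [Groupoid C] := {X : Set (Arr C) // IsPB X}

namespace PBAux
variable {C : Type*} [Groupoid C]

def idArr (p : C) : Arr C := ⟨p, p, 𝟙 p⟩

def comp (x y : Arr C) (h : x.2.1 = y.1) : Arr C :=
  ⟨x.1, y.2.1, x.2.2 ≫ eqToHom h ≫ y.2.2⟩

def invArr (x : Arr C) : Arr C := ⟨x.2.1, x.1, Groupoid.inv x.2.2⟩

lemma mem_mul {X Y : Set (Arr C)} {z : Arr C} :
    z ∈ mulArrSet X Y ↔ ∃ x ∈ X, ∃ y ∈ Y, ∃ h, z = comp x y h := Iff.rfl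

lemma mem_inv {X : Set (Arr C)} {z : Arr C} :
    z ∈ invArrSet X ↔ ∃ x ∈ X, invArr x = z := Set.mem_image _ _ _

lemma comp_assoc (x y z : Arr C) (h1 : x.2.1 = y.1) (h2 : y.2.1 = z.1) :
    comp (comp x y h1) z h2 = comp x (comp y z h2) h1 := by
  obtain ⟨a, b, f⟩ := x; obtain ⟨c, d, g⟩ := y; obtain ⟨p, q, k⟩ := z
  dsimp [comp] at h1 h2 ⊢
  subst h1; subst h2
  simp [comp]

lemma comp_idArr (x : Arr C) (q : C) (h : x.2.1 = (idArr q).1) : comp x (idArr q) h = x := by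
  obtain ⟨a, b, f⟩ := x
  dsimp [comp, idArr] at h ⊢
  subst h; simp

lemma idArr_comp (q : C) (x : Arr C) (h : (idArr q).2.1 = x.1) : comp (idArr q) x h = x := by
  obtain ⟨a, b, f⟩ := x
  dsimp [comp, idArr] at h ⊢
  subst h; simp

lemma comp_invArr (x : Arr C) : comp x (invArr x) rfl = idArr x.1 := by
  obtain ⟨a, b, f⟩ := x
  simp [comp, invArr, idArr]

lemma invArr_comp (x : Arr C) : comp (invArr x) x rfl = idArr x.2.1 := by
  obtain ⟨a, b, f⟩ := x
  simp [comp, invArr, idArr]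

lemma invArr_invArr (x : Arr C) : invArr (invArr x) = x := by
  obtain ⟨a, b, f⟩ := x
  simp [invArr]

lemma inv_inv_set (X : Set (Arr C)) : invArrSet (invArrSet X) = X := by
  show (fun x : Arr C => invArr x) '' ((fun x : Arr C => invArr x) '' X) = X
  rw [← Set.image_comp]
  simp [Function.comp_def, invArr_invArr]

lemma mul_assoc_set (X Y Z : Set (Arr C)) :
    mulArrSet (mulArrSet X Y) Z = mulArrSet X (mulArrSet Y Z) := by
  ext w
  constructor
  · rintro ⟨u, ⟨x, hx, y, hy, h1, rfl⟩, z, hz, h2, rfl⟩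
    refine ⟨x, hx, comp y z h2, ⟨y, hy, z, hz, h2, rfl⟩, h1, ?_⟩
    simp [comp]
  · rintro ⟨x, hx, u, ⟨y, hy, z, hz, h2, rfl⟩, h1, rfl⟩
    refine ⟨comp x y h1, ⟨x, hx, y, hy, h1, rfl⟩, z, hz, h2, ?_⟩
    simp [comp]

lemma pb_mul {X Y : Set (Arr C)} (hX : IsPB X) (hY : IsPB Y) : IsPB (mulArrSet X Y) := by
  constructor
  · rintro _ ⟨x, hx, y, hy, h, rfl⟩ _ ⟨x', hx', y', hy', h', rfl⟩ hs
    obtain rfl := hX.1 x hx x' hx' hs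
    obtain rfl := hY.1 y hy y' hy' (h.symm.trans h')
    rfl
  · rintro _ ⟨x, hx, y, hy, h, rfl⟩ _ ⟨x', hx', y', hy', h', rfl⟩ hs
    obtain rfl := hY.2 y hy y' hy' hs
    obtain rfl := hX.2 x hx x' hx' (h.trans h'.symm)
    rfl

lemma pb_inv {X : Set (Arr C)} (hX : IsPB X) : IsPB (invArrSet X) := by
  constructor
  · rintro _ ⟨x, hx, rfl⟩ _ ⟨y, hy, rfl⟩ h
    obtain rfl := hX.2 x hx y hy h; rfl
  · rintro _ ⟨x, hx, rfl⟩ _ ⟨y, hy, rfl⟩ h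
    obtain rfl := hX.1 x hx y hy h; rfl

lemma pb_subset {X Y : Set (Arr C)} (h : X ⊆ Y) (hY : IsPB Y) : IsPB X :=
  ⟨fun x hx y hy => hY.1 x (h hx) y (h hy), fun x hx y hy => hY.2 x (h hx) y (h hy)⟩

lemma pb_empty : IsPB (∅ : Set (Arr C)) := by
  constructor <;> rintro x ⟨⟩

end PBAux

namespace PBAux
variable {C : Type*} [Groupoid C]

/-- sets of identity arrows -/
def IsIdSet (E : Set (Arr C)) : Prop := ∀ e ∈ E, ∃ p, e = idArr p

lemma idset_mul {E F : Set (Arr C)} (hE : IsIdSet E) (hF : IsIdSet F) :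
    mulArrSet E F = E ∩ F := by
  ext z
  constructor
  · rintro ⟨e, he, f, hf, h, rfl⟩
    obtain ⟨p, rfl⟩ := hE e he
    obtain ⟨q, rfl⟩ := hF f hf
    have hpq : p = q := h
    subst hpq
    have : comp (idArr p) (idArr p) h = idArr p := idArr_comp p (idArr p) h
    rw [show (⟨(idArr p).1, (idArr p).2.1, (idArr p).2.2 ≫ eqToHom h ≫ (idArr p).2.2⟩ : Arr C)
        = comp (idArr p) (idArr p) h from rfl, this]
    exact ⟨he, hf⟩
  · rintro ⟨hzE, hzF⟩
    obtain ⟨p, rfl⟩ := hE z hzE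
    refine ⟨idArr p, hzE, idArr p, hzF, rfl, ?_⟩
    have : comp (idArr p) (idArr p) rfl = idArr p := idArr_comp p (idArr p) rfl
    exact this.symm

lemma idset_idem {E : Set (Arr C)} (hE : IsIdSet E) : mulArrSet E E = E := by
  rw [idset_mul hE hE, Set.inter_self]

lemma pb_idem_idset {E : Set (Arr C)} (hE : IsPB E) (h : mulArrSet E E = E) :
    IsIdSet E := by
  intro e he
  have he' : e ∈ mulArrSet E E := h.symm ▸ he
  obtain ⟨x, hx, y, hy, hc, hz⟩ := he'
  have hex : e = x := hE.1 e he x hx (by rw [hz])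
  have hey : e = y := hE.2 e he y hy (by rw [hz])
  subst hex
  subst hey
  obtain ⟨a, b, f⟩ := e
  dsimp at hc
  subst hc
  simp only [eqToHom_refl, Category.id_comp] at hz
  injection hz with h1 h2
  injection h2 with h3 h4
  have hf : f ≫ f = f := h4.symm
  have hfid : f = 𝟙 b := by
    have : f ≫ f = f ≫ 𝟙 b := by rw [hf, Category.comp_id]
    exact (cancel_epi f).mp this
  exact ⟨b, by simp [idArr, hfid]⟩

end PBAux

namespace PBAux
variable {C : Type*} [Groupoid C]

lemma comp_invArr' (x : Arr C) (h : x.2.1 = (invArr x).1) : comp x (invArr x) h = idArr x.1 := by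
  obtain ⟨a, b, f⟩ := x; cases h; simp [comp, invArr, idArr]

lemma invArr_comp' (x : Arr C) (h : (invArr x).2.1 = x.1) : comp (invArr x) x h = idArr x.2.1 := by
  obtain ⟨a, b, f⟩ := x; simp [comp, invArr, idArr]

def srcIds (X : Set (Arr C)) : Set (Arr C) := {z | ∃ x ∈ X, z = idArr x.1}
def codIds (X : Set (Arr C)) : Set (Arr C) := {z | ∃ x ∈ X, z = idArr x.2.1}

lemma srcIds_idset (X : Set (Arr C)) : IsIdSet (srcIds X) := by
  rintro e ⟨x, hx, rfl⟩; exact ⟨x.1, rfl⟩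

lemma codIds_idset (X : Set (Arr C)) : IsIdSet (codIds X) := by
  rintro e ⟨x, hx, rfl⟩; exact ⟨x.2.1, rfl⟩

lemma mul_inv_self {X : Set (Arr C)} (hX : IsPB X) :
    mulArrSet X (invArrSet X) = srcIds X := by
  ext z
  constructor
  · rintro ⟨x, hx, u, ⟨y, hy, rfl⟩, h, rfl⟩
    obtain rfl := hX.2 x hx y hy h
    exact ⟨x, hx, (comp_invArr' x h).symm ▸ rfl⟩
  · rintro ⟨x, hx, rfl⟩
    refine ⟨x, hx, invArr x, ⟨x, hx, rfl⟩, rfl, ?_⟩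
    exact (comp_invArr' x rfl).symm

lemma inv_mul_self {X : Set (Arr C)} (hX : IsPB X) :
    mulArrSet (invArrSet X) X = codIds X := by
  ext z
  constructor
  · rintro ⟨u, ⟨y, hy, rfl⟩, x, hx, h, rfl⟩
    obtain rfl := hX.1 y hy x hx h
    exact ⟨y, hy, (invArr_comp' y h).symm ▸ rfl⟩
  · rintro ⟨x, hx, rfl⟩
    refine ⟨invArr x, ⟨x, hx, rfl⟩, x, hx, rfl, ?_⟩
    exact (invArr_comp' x rfl).symm

lemma srcIds_mul {X : Set (Arr C)} (hX : IsPB X) : mulArrSet (srcIds X) X = X := by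
  ext z
  constructor
  · rintro ⟨u, ⟨y, hy, rfl⟩, x, hx, h, rfl⟩
    obtain rfl := hX.1 y hy x hx h
    show comp (idArr y.1) y h ∈ X
    rw [idArr_comp]
    exact hy
  · intro hz
    refine ⟨idArr z.1, ⟨z, hz, rfl⟩, z, hz, rfl, ?_⟩
    exact (idArr_comp z.1 z rfl).symm

lemma mul_codIds {X Y : Set (Arr C)} (hY : IsPB Y) (hXY : X ⊆ Y) :
    mulArrSet Y (codIds X) = X := by
  ext z
  constructor
  · rintro ⟨y, hy, u, ⟨x, hx, rfl⟩, h, rfl⟩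
    obtain rfl := hY.2 y hy x (hXY hx) h
    show comp y (idArr y.2.1) h ∈ X
    rw [comp_idArr]
    exact hx
  · intro hz
    refine ⟨z, hXY hz, idArr z.2.1, ⟨z, hz, rfl⟩, rfl, ?_⟩
    exact (comp_idArr z z.2.1 rfl).symm

lemma idset_mul_subset {Y E : Set (Arr C)} (hE : IsIdSet E) : mulArrSet Y E ⊆ Y := by
  rintro _ ⟨y, hy, e, heE, h, rfl⟩
  obtain ⟨p, rfl⟩ := hE e heE
  show comp y (idArr p) h ∈ Y
  rw [comp_idArr]
  exact hy

lemma cross_src {X Y : Set (Arr C)}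
    (hI : IsIdSet (mulArrSet (invArrSet X) Y)) :
    ∀ x ∈ X, ∀ y ∈ Y, x.1 = y.1 → x = y := by
  rintro ⟨a, b, f⟩ hx ⟨a', c, g⟩ hy h
  dsimp at h
  subst h
  have hz : comp (invArr ⟨a, b, f⟩) ⟨a, c, g⟩ rfl ∈ mulArrSet (invArrSet X) Y :=
    ⟨invArr ⟨a, b, f⟩, ⟨⟨a, b, f⟩, hx, rfl⟩, ⟨a, c, g⟩, hy, rfl, rfl⟩
  obtain ⟨p, hp⟩ := hI _ hz
  simp only [comp, invArr, idArr, eqToHom_refl, Category.id_comp] at hp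
  injection hp with e1 e2
  subst e1
  injection e2 with e3 e4
  subst e3
  have e4' := eq_of_heq e4
  have hg : g = f := by
    have h5 : Groupoid.inv f ≫ g = Groupoid.inv f ≫ f := by
      have e5 : Groupoid.inv f ≫ 𝟙 _ ≫ g = 𝟙 c := e4'; rw [Category.id_comp] at e5; rw [e5, Groupoid.inv_comp]
    exact (cancel_epi (Groupoid.inv f)).mp h5
  rw [hg]

lemma cross_cod {X Y : Set (Arr C)}
    (hI : IsIdSet (mulArrSet X (invArrSet Y))) :
    ∀ x ∈ X, ∀ y ∈ Y, x.2.1 = y.2.1 → x = y := by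
  rintro ⟨a, b, f⟩ hx ⟨a', c, g⟩ hy h
  dsimp at h
  subst h
  have hz : comp ⟨a, b, f⟩ (invArr ⟨a', b, g⟩) rfl ∈ mulArrSet X (invArrSet Y) :=
    ⟨⟨a, b, f⟩, hx, invArr ⟨a', b, g⟩, ⟨⟨a', b, g⟩, hy, rfl⟩, rfl, rfl⟩
  obtain ⟨p, hp⟩ := hI _ hz
  simp only [comp, invArr, idArr, eqToHom_refl, Category.id_comp] at hp
  injection hp with e1 e2
  subst e1
  injection e2 with e3 e4
  subst e3
  have e4' := eq_of_heq e4
  have hg : f = g := by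
    have h5 : f ≫ Groupoid.inv g = g ≫ Groupoid.inv g := by
      rw [e4', Groupoid.comp_inv]
    exact (cancel_mono (Groupoid.inv g)).mp h5
  rw [hg]

lemma pb_union {X Y : Set (Arr C)} (hX : IsPB X) (hY : IsPB Y)
    (h1 : ∀ x ∈ X, ∀ y ∈ Y, x.1 = y.1 → x = y)
    (h2 : ∀ x ∈ X, ∀ y ∈ Y, x.2.1 = y.2.1 → x = y) :
    IsPB (X ∪ Y) := by
  constructor
  · rintro x (hx | hx) y (hy | hy) h
    · exact hX.1 x hx y hy h
    · exact h1 x hx y hy h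
    · exact (h1 y hy x hx h.symm).symm
    · exact hY.1 x hx y hy h
  · rintro x (hx | hx) y (hy | hy) h
    · exact hX.2 x hx y hy h
    · exact h2 x hx y hy h
    · exact (h2 y hy x hx h.symm).symm
    · exact hY.2 x hx y hy h

lemma mul_union (A B D : Set (Arr C)) :
    mulArrSet A (B ∪ D) = mulArrSet A B ∪ mulArrSet A D := by
  ext z
  constructor
  · rintro ⟨x, hx, y, (hy | hy), h, rfl⟩
    · exact Or.inl ⟨x, hx, y, hy, h, rfl⟩
    · exact Or.inr ⟨x, hx, y, hy, h, rfl⟩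
  · rintro (⟨x, hx, y, hy, h, rfl⟩ | ⟨x, hx, y, hy, h, rfl⟩)
    · exact ⟨x, hx, y, Or.inl hy, h, rfl⟩
    · exact ⟨x, hx, y, Or.inr hy, h, rfl⟩

lemma union_mul (A B D : Set (Arr C)) :
    mulArrSet (A ∪ B) D = mulArrSet A D ∪ mulArrSet B D := by
  ext z
  constructor
  · rintro ⟨x, (hx | hx), y, hy, h, rfl⟩
    · exact Or.inl ⟨x, hx, y, hy, h, rfl⟩
    · exact Or.inr ⟨x, hx, y, hy, h, rfl⟩
  · rintro (⟨x, hx, y, hy, h, rfl⟩ | ⟨x, hx, y, hy, h, rfl⟩)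
    · exact ⟨x, Or.inl hx, y, hy, h, rfl⟩
    · exact ⟨x, Or.inr hx, y, hy, h, rfl⟩

lemma empty_mul (A : Set (Arr C)) : mulArrSet ∅ A = ∅ := by
  ext z
  simp only [Set.mem_empty_iff_false, iff_false]
  rintro ⟨x, ⟨⟩, _⟩

lemma mul_empty (A : Set (Arr C)) : mulArrSet A ∅ = ∅ := by
  ext z
  simp only [Set.mem_empty_iff_false, iff_false]
  rintro ⟨x, hx, y, ⟨⟩, _⟩

lemma orth_left {X Y : Set (Arr C)} (hX : IsPB X) (hYX : Y ⊆ X) :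
    mulArrSet (invArrSet Y) (X \ Y) = ∅ := by
  ext z
  simp only [Set.mem_empty_iff_false, iff_false]
  rintro ⟨u, ⟨y, hy, rfl⟩, x, ⟨hxX, hxY⟩, h, rfl⟩
  exact hxY ((hX.1 y (hYX hy) x hxX h) ▸ hy)

lemma orth_right {X Y : Set (Arr C)} (hX : IsPB X) (hYX : Y ⊆ X) :
    mulArrSet Y (invArrSet (X \ Y)) = ∅ := by
  ext z
  simp only [Set.mem_empty_iff_false, iff_false]
  rintro ⟨y, hy, u, ⟨x, ⟨hxX, hxY⟩, rfl⟩, h, rfl⟩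
  exact hxY ((hX.2 y (hYX hy) x hxX h) ▸ hy)

end PBAux


namespace PBAux
variable {C : Type*} [Groupoid C]

noncomputable def pbMul (X Y : PB C) : PB C := ⟨mulArrSet X.1 Y.1, pb_mul X.2 Y.2⟩
noncomputable def pbInv (X : PB C) : PB C := ⟨invArrSet X.1, pb_inv X.2⟩
noncomputable def pbZero : PB C := ⟨∅, pb_empty⟩
open Classical in
noncomputable def pbSup (X Y : PB C) : PB C :=
  if h : IsPB (X.1 ∪ Y.1) then ⟨X.1 ∪ Y.1, h⟩ else X
noncomputable def pbSdiff (X Y : PB C) : PB C :=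
  ⟨X.1 \ Y.1, pb_subset Set.diff_subset X.2⟩

lemma pbSup_val {X Y : PB C} (h : IsPB (X.1 ∪ Y.1)) : (pbSup X Y).1 = X.1 ∪ Y.1 := by
  have hs : pbSup X Y = (⟨X.1 ∪ Y.1, h⟩ : PB C) := dif_pos h
  rw [hs]

lemma massoc (a b c : PB C) : pbMul (pbMul a b) c = pbMul a (pbMul b c) :=
  Subtype.ext (mul_assoc_set _ _ _)

lemma pbInv_pbInv (a : PB C) : pbInv (pbInv a) = a := Subtype.ext (inv_inv_set _)

lemma maia (a : PB C) : pbMul (pbMul a (pbInv a)) a = a := by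
  apply Subtype.ext
  show mulArrSet (mulArrSet a.1 (invArrSet a.1)) a.1 = a.1
  rw [mul_inv_self a.2, srcIds_mul a.2]

lemma iai (a : PB C) : pbMul (pbMul (pbInv a) a) (pbInv a) = pbInv a := by
  have h := maia (pbInv a)
  rwa [pbInv_pbInv] at h

lemma pb_idem_idset' {e : PB C} (he : pbMul e e = e) : IsIdSet e.1 :=
  pb_idem_idset e.2 (congrArg Subtype.val he)

lemma pb_idem_comm {e f : PB C} (he : pbMul e e = e) (hf : pbMul f f = f) :
    pbMul e f = pbMul f e := by
  apply Subtype.ext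
  show mulArrSet e.1 f.1 = mulArrSet f.1 e.1
  rw [idset_mul (pb_idem_idset' he) (pb_idem_idset' hf),
    idset_mul (pb_idem_idset' hf) (pb_idem_idset' he), Set.inter_comm]

lemma pb_inv_unique (a t : PB C) (h1 : pbMul (pbMul a t) a = a)
    (h2 : pbMul (pbMul t a) t = t) : t = pbInv a := by
  set s := pbInv a with hs
  have hs1 : pbMul (pbMul a s) a = a := maia a
  have hs2 : pbMul (pbMul s a) s = s := iai a
  have idem_ta : pbMul (pbMul t a) (pbMul t a) = pbMul t a := by
    calc pbMul (pbMul t a) (pbMul t a) = pbMul (pbMul (pbMul t a) t) a :=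
          (massoc _ _ _).symm
      _ = pbMul t a := by rw [h2]
  have idem_sa : pbMul (pbMul s a) (pbMul s a) = pbMul s a := by
    calc pbMul (pbMul s a) (pbMul s a) = pbMul (pbMul (pbMul s a) s) a :=
          (massoc _ _ _).symm
      _ = pbMul s a := by rw [hs2]
  have idem_at : pbMul (pbMul a t) (pbMul a t) = pbMul a t := by
    calc pbMul (pbMul a t) (pbMul a t) = pbMul (pbMul (pbMul a t) a) t :=
          (massoc _ _ _).symm
      _ = pbMul a t := by rw [h1]
  have idem_as : pbMul (pbMul a s) (pbMul a s) = pbMul a s := by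
    calc pbMul (pbMul a s) (pbMul a s) = pbMul (pbMul (pbMul a s) a) s :=
          (massoc _ _ _).symm
      _ = pbMul a s := by rw [hs1]
  have key1 : t = pbMul (pbMul t a) s := by
    calc t = pbMul (pbMul t a) t := h2.symm
      _ = pbMul (pbMul t (pbMul (pbMul a s) a)) t := by rw [hs1]
      _ = pbMul (pbMul (pbMul t (pbMul a s)) a) t := by rw [massoc t (pbMul a s) a]
      _ = pbMul (pbMul t (pbMul a s)) (pbMul a t) := massoc _ _ _
      _ = pbMul t (pbMul (pbMul a s) (pbMul a t)) := massoc _ _ _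
      _ = pbMul t (pbMul (pbMul a t) (pbMul a s)) := by rw [pb_idem_comm idem_as idem_at]
      _ = pbMul (pbMul t (pbMul a t)) (pbMul a s) := (massoc _ _ _).symm
      _ = pbMul (pbMul (pbMul t a) t) (pbMul a s) := by rw [massoc t a t]
      _ = pbMul t (pbMul a s) := by rw [h2]
      _ = pbMul (pbMul t a) s := (massoc _ _ _).symm
  have key2 : s = pbMul (pbMul s a) t := by
    calc s = pbMul (pbMul s a) s := hs2.symm
      _ = pbMul (pbMul s (pbMul (pbMul a t) a)) s := by rw [h1]
      _ = pbMul (pbMul (pbMul s (pbMul a t)) a) s := by rw [massoc s (pbMul a t) a]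
      _ = pbMul (pbMul s (pbMul a t)) (pbMul a s) := massoc _ _ _
      _ = pbMul s (pbMul (pbMul a t) (pbMul a s)) := massoc _ _ _
      _ = pbMul s (pbMul (pbMul a s) (pbMul a t)) := by rw [pb_idem_comm idem_at idem_as]
      _ = pbMul (pbMul s (pbMul a s)) (pbMul a t) := (massoc _ _ _).symm
      _ = pbMul (pbMul (pbMul s a) s) (pbMul a t) := by rw [massoc s a s]
      _ = pbMul s (pbMul a t) := by rw [hs2]
      _ = pbMul (pbMul s a) t := (massoc _ _ _).symm
  calc t = pbMul (pbMul t a) s := key1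
    _ = pbMul (pbMul t a) (pbMul (pbMul s a) t) := by rw [← key2]
    _ = pbMul (pbMul (pbMul t a) (pbMul s a)) t := (massoc _ _ _).symm
    _ = pbMul (pbMul (pbMul s a) (pbMul t a)) t := by rw [pb_idem_comm idem_ta idem_sa]
    _ = pbMul (pbMul s a) (pbMul (pbMul t a) t) := massoc _ _ _
    _ = pbMul (pbMul s a) t := by rw [h2]
    _ = s := key2.symm

lemma pb_natLe_iff (X Y : PB C) :
    @natLe (PB C) ⟨pbMul⟩ X Y ↔ X.val ⊆ Y.val := by
  constructor
  · rintro ⟨e, he, hXe⟩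
    have hids : IsIdSet e.1 := pb_idem_idset' he
    have : X.1 = mulArrSet Y.1 e.1 := congrArg Subtype.val hXe
    rw [this]
    exact idset_mul_subset hids
  · intro h
    refine ⟨pbMul (pbInv X) X, ?_, ?_⟩
    · show pbMul (pbMul (pbInv X) X) (pbMul (pbInv X) X) = pbMul (pbInv X) X
      apply Subtype.ext
      show mulArrSet _ _ = _
      rw [show (pbMul (pbInv X) X).1 = codIds X.1 from inv_mul_self X.2]
      exact idset_idem (codIds_idset _)
    · apply Subtype.ext
      show X.1 = mulArrSet Y.1 (pbMul (pbInv X) X).1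
      rw [show (pbMul (pbInv X) X).1 = codIds X.1 from inv_mul_self X.2,
        mul_codIds Y.2 h]

lemma pb_compat_union {X Y : PB C}
    (hC : @Compat (PB C) ⟨pbMul⟩ ⟨pbInv⟩ X Y) : IsPB (X.1 ∪ Y.1) := by
  obtain ⟨hC1, hC2⟩ := hC
  have h1 : IsIdSet (mulArrSet (invArrSet X.1) Y.1) :=
    pb_idem_idset' (e := pbMul (pbInv X) Y) hC1
  have h2 : IsIdSet (mulArrSet X.1 (invArrSet Y.1)) :=
    pb_idem_idset' (e := pbMul X (pbInv Y)) hC2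
  exact pb_union X.2 Y.2 (cross_src h1) (cross_cod h2)

end PBAux

open PBAux in

/-- The partial bisections of a groupoid, under setwise multiplication (with
pointwise inverse, empty set as zero, union of compatible pairs as join and
set difference as relative complement), form a Boolean inverse semigroup whose
natural partial order is subset inclusion. -/
theorem partial_bisections_boolean_inverse_semigroup (C : Type*) [Groupoid C] :
    ∃ (m : PB C → PB C → PB C) (i : PB C → PB C) (z : PB C)
      (s : PB C → PB C → PB C) (sd : PB C → PB C → PB C),
      (∀ X Y : PB C, (m X Y).val = mulArrSet X.val Y.val) ∧
      (∀ X : PB C, (i X).val = invArrSet X.val) ∧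
      z.val = (∅ : Set (Arr C)) ∧
      (∀ X Y : PB C, @Compat (PB C) ⟨m⟩ ⟨i⟩ X Y → (s X Y).val = X.val ∪ Y.val) ∧
      (∀ X Y : PB C, Y.val ⊆ X.val → (sd X Y).val = X.val \ Y.val) ∧
      @BooleanInvSemigroup (PB C) ⟨m⟩ ⟨i⟩ ⟨z⟩ ⟨s⟩ ⟨sd⟩ ∧
      (∀ X Y : PB C, @natLe (PB C) ⟨m⟩ X Y ↔ X.val ⊆ Y.val) := by
  classical
  letI : Mul (PB C) := ⟨pbMul⟩
  letI : Inv (PB C) := ⟨pbInv⟩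
  letI : Zero (PB C) := ⟨pbZero⟩
  letI : Max (PB C) := ⟨pbSup⟩
  letI : SDiff (PB C) := ⟨pbSdiff⟩
  refine ⟨pbMul, pbInv, pbZero, pbSup, pbSdiff, fun _ _ => rfl, fun _ => rfl, rfl,
    ?_, fun _ _ _ => rfl, ?_, pb_natLe_iff⟩
  · intro X Y hC
    exact pbSup_val (pb_compat_union hC)
  · refine ⟨?_, ?_, ?_, ?_, ?_, ?_, ?_, ?_, ?_⟩
    · exact ⟨fun a b c => massoc a b c, fun a => maia a, fun a => iai a,
        fun a t h1 h2 => pb_inv_unique a t h1 h2,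
        fun a => Subtype.ext (empty_mul _), fun a => Subtype.ext (mul_empty _)⟩
    · -- le_sup_left
      intro a b hC
      rw [pb_natLe_iff]
      show a.1 ⊆ (pbSup a b).1
      rw [pbSup_val (pb_compat_union hC)]
      exact Set.subset_union_left
    · intro a b hC
      rw [pb_natLe_iff]
      show b.1 ⊆ (pbSup a b).1
      rw [pbSup_val (pb_compat_union hC)]
      exact Set.subset_union_right
    · intro a b c hC ha hb
      rw [pb_natLe_iff] at ha hb ⊢
      show (pbSup a b).1 ⊆ c.1
      rw [pbSup_val (pb_compat_union hC)]
      exact Set.union_subset ha hb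
    · -- mul_sup
      intro a b c hC
      have hbc := pb_compat_union hC
      have habc : IsPB ((pbMul a b).1 ∪ (pbMul a c).1) := by
        show IsPB (mulArrSet a.1 b.1 ∪ mulArrSet a.1 c.1)
        rw [← mul_union]
        exact pb_mul a.2 hbc
      apply Subtype.ext
      show mulArrSet a.1 (pbSup b c).1 = (pbSup (pbMul a b) (pbMul a c)).1
      rw [pbSup_val hbc, pbSup_val habc, mul_union]
      rfl
    · intro a b c hC
      have hab := pb_compat_union hC
      have habc : IsPB ((pbMul a c).1 ∪ (pbMul b c).1) := by
        show IsPB (mulArrSet a.1 c.1 ∪ mulArrSet b.1 c.1)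
        rw [← union_mul]
        exact pb_mul hab c.2
      apply Subtype.ext
      show mulArrSet (pbSup a b).1 c.1 = (pbSup (pbMul a c) (pbMul b c)).1
      rw [pbSup_val hab, pbSup_val habc, union_mul]
      rfl
    · -- sdiff_le
      intro a c h
      rw [pb_natLe_iff]
      exact Set.diff_subset
    · -- sdiff_orth
      intro a c h
      rw [pb_natLe_iff] at h
      constructor
      · exact Subtype.ext (orth_left a.2 h)
      · exact Subtype.ext (orth_right a.2 h)
    · -- sup_sdiff
      intro a c h
      rw [pb_natLe_iff] at h
      have hu : c.1 ∪ (pbSdiff a c).1 = a.1 := Set.union_diff_cancel h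
      have hpb : IsPB (c.1 ∪ (pbSdiff a c).1) := by rw [hu]; exact a.2
      apply Subtype.ext
      show (pbSup c (pbSdiff a c)).1 = a.1
      rw [pbSup_val hpb, hu]
end

section
/- Every ultrafilter in the meet semilattice E(S) of idempotents of an inverse semigroup S with zero is a tight filter: if a ∈ A and C is a cover of a, then C ∩ A ≠ ∅. -/
/-- A proper filter in a meet semilattice with zero. -/
def SLPFilt {E : Type*} [SemilatticeInf E] [OrderBot E] (A : Set E) : Prop :=
  A.Nonempty ∧ (∀ a ∈ A, ∀ b, a ≤ b → b ∈ A) ∧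
    (∀ a ∈ A, ∀ b ∈ A, a ⊓ b ∈ A) ∧ (⊥ : E) ∉ A

/-- An ultrafilter: a maximal proper filter. -/
def SLUltra {E : Type*} [SemilatticeInf E] [OrderBot E] (A : Set E) : Prop :=
  SLPFilt A ∧ ∀ B : Set E, SLPFilt B → A ⊆ B → A = B

/-- A finite subset `C ⊆ a↓` is a cover of `a` if every nonzero `x ≤ a` meets
some element of `C`. -/
def SLCover {E : Type*} [SemilatticeInf E] [OrderBot E] (C : Finset E) (a : E) : Prop :=
  (∀ c ∈ C, c ≤ a) ∧ ∀ x : E, x ≤ a → x ≠ ⊥ → ∃ c ∈ C, x ⊓ c ≠ ⊥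

/-- If an ultrafilter does not contain `c`, some member of it is disjoint from `c`. -/
lemma SLUltra.exists_disjoint {E : Type*} [SemilatticeInf E] [OrderBot E]
    {A : Set E} (hA : SLUltra A) {c : E} (hc : c ∉ A) : ∃ b ∈ A, b ⊓ c = ⊥ := by
  by_contra h
  push_neg at h
  obtain ⟨⟨hne, hup, hinf, hbot⟩, hmax⟩ := hA
  set B : Set E := {x | ∃ b ∈ A, b ⊓ c ≤ x} with hB
  have hAB : A ⊆ B := fun x hx => ⟨x, hx, inf_le_left⟩
  have hBfilt : SLPFilt B := by
    refine ⟨hne.mono hAB, ?_, ?_, ?_⟩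
    · rintro x ⟨b, hb, hbc⟩ y hxy
      exact ⟨b, hb, hbc.trans hxy⟩
    · rintro x ⟨b, hb, hbc⟩ y ⟨b', hb', hbc'⟩
      exact ⟨b ⊓ b', hinf b hb b' hb',
        le_inf ((inf_le_inf_right c inf_le_left).trans hbc)
          ((inf_le_inf_right c inf_le_right).trans hbc')⟩
    · rintro ⟨b, hb, hbc⟩
      exact h b hb (le_bot_iff.mp hbc)
  have hAeqB := hmax B hBfilt hAB
  obtain ⟨b, hb⟩ := hne
  have hcB : c ∈ B := ⟨b, hb, inf_le_right⟩
  rw [← hAeqB] at hcB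
  exact hc hcB

/-- A filter is closed under nonempty finite infima. -/
lemma SLPFilt.inf'_mem {E : Type*} [SemilatticeInf E] [OrderBot E]
    {A : Set E} (hA : SLPFilt A) (s : Finset E) (hs : s.Nonempty) (f : E → E)
    (hf : ∀ c ∈ s, f c ∈ A) : s.inf' hs f ∈ A := by
  revert hf
  induction hs using Finset.Nonempty.cons_induction with
  | singleton a => intro hf; simpa using hf a (by simp)
  | cons a s ha hs ih =>
    intro hf
    rw [Finset.inf'_cons (H := hs)]
    exact hA.2.2.1 _ (hf a (by simp)) _ (ih fun c hc => hf c (Finset.mem_cons_of_mem hc))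

/-- Every ultrafilter in a meet semilattice with zero is tight: if `a ∈ A` and
`C` is a cover of `a`, then `C ∩ A ≠ ∅`. -/
theorem ultrafilter_is_tight {E : Type*} [SemilatticeInf E] [OrderBot E]
    (A : Set E) (hA : SLUltra A) :
    ∀ a ∈ A, ∀ C : Finset E, SLCover C a → ∃ c ∈ C, c ∈ A := by
  intro a ha C hC
  by_contra h
  push_neg at h
  have haA : a ≠ ⊥ := fun hab => hA.1.2.2.2 (hab ▸ ha)
  rcases C.eq_empty_or_nonempty with rfl | hCne
  · obtain ⟨c, hc, -⟩ := hC.2 a le_rfl haA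
    simp at hc
  choose f hfA hfd using fun c (hc : c ∈ C) => hA.exists_disjoint (h c hc)
  classical
  set g : E → E := fun c => if hc : c ∈ C then f c hc else a with hg
  have hgA : ∀ c ∈ C, g c ∈ A := fun c hc => by simp [hg, hc, hfA]
  have hinfA : C.inf' hCne g ∈ A := hA.1.inf'_mem C hCne g hgA
  set x : E := a ⊓ C.inf' hCne g with hx
  have hxA : x ∈ A := hA.1.2.2.1 a ha _ hinfA
  have hxbot : x ≠ ⊥ := fun hb => hA.1.2.2.2 (hb ▸ hxA)
  obtain ⟨c, hc, hxc⟩ := hC.2 x inf_le_left hxbot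
  apply hxc
  have hxle : x ≤ g c := inf_le_right.trans (Finset.inf'_le g hc)
  have : x ⊓ c ≤ g c ⊓ c := inf_le_inf_right c hxle
  rw [le_bot_iff.symm] at *
  calc x ⊓ c ≤ g c ⊓ c := this
    _ = ⊥ := by simp [hg, hc, hfd]
end

section
/- Let S be an inverse semigroup with zero, a ∈ S a nonzero element, {a₁,...,aₘ} ⊆ a↓ a cover of a, and let b ∈ S with ab ≠ 0. Then {a₁b, ..., aₘb} is a cover of ab. -/
/-- A finite subset `C ⊆ a↓` is a cover of `a` if every nonzero `x ≤ a` has a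
nonzero common lower bound (i.e. nonzero meet) with some element of `C`. -/
def IsCover {S : Type*} [Mul S] [Zero S] (C : Finset S) (a : S) : Prop :=
  (∀ c ∈ C, natLe c a) ∧
    ∀ x : S, natLe x a → x ≠ 0 →
      ∃ c ∈ C, ∃ y : S, y ≠ (0 : S) ∧ natLe y x ∧ natLe y c

section Aux
variable {S : Type*} [Mul S] [Inv S] [Zero S] (hS : InvSemigroupZero S)
include hS

theorem ISZ.inv_inv (a : S) : a⁻¹⁻¹ = a :=
  (hS.inv_unique a⁻¹ a (hS.inv_mul_inv a) (hS.mul_inv_mul a)).symm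

theorem ISZ.idem_inv {e : S} (he : IsIdem e) : e⁻¹ = e := by
  have h : e * e * e = e := by rw [he, he]
  exact (hS.inv_unique e e h h).symm

/-- The product of two idempotents is idempotent. -/
theorem ISZ.idem_mul {e f : S} (he : IsIdem e) (hf : IsIdem f) : IsIdem (e * f) := by
  letI : Semigroup S := ⟨hS.mul_assoc⟩
  set x := (e * f)⁻¹ with hx
  have h1 : e * f * x * (e * f) = e * f := hS.mul_inv_mul (e * f)
  have h2 : x * (e * f) * x = x := hS.inv_mul_inv (e * f)
  have key : f * x * e = x := by
    apply hS.inv_unique (e * f) (f * x * e)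
    · calc e * f * (f * x * e) * (e * f)
          = e * (f * f) * x * (e * e) * f := by simp [mul_assoc]
        _ = e * f * x * (e * f) := by rw [hf, he]; simp [mul_assoc]
        _ = e * f := h1
    · calc f * x * e * (e * f) * (f * x * e)
          = f * (x * (e * e * (f * f)) * x) * e := by simp [mul_assoc]
        _ = f * (x * (e * f) * x) * e := by rw [he, hf]
        _ = f * x * e := by rw [h2]
  have hxidem : IsIdem x := by
    show x * x = x
    calc x * x = f * x * e * (f * x * e) := by rw [key]
      _ = f * (x * (e * f) * x) * e := by simp [mul_assoc]
      _ = f * x * e := by rw [h2]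
      _ = x := key
  have hef : e * f = x := by
    have h3 := ISZ.idem_inv hS hxidem
    rw [hx, ISZ.inv_inv hS] at h3
    rw [hx]; exact h3
  rw [hef]; exact hxidem

/-- Idempotents commute. -/
theorem ISZ.idem_comm {e f : S} (he : IsIdem e) (hf : IsIdem f) : e * f = f * e := by
  letI : Semigroup S := ⟨hS.mul_assoc⟩
  have hef : IsIdem (e * f) := ISZ.idem_mul hS he hf
  have hfe : IsIdem (f * e) := ISZ.idem_mul hS hf he
  have h : f * e = (e * f)⁻¹ := by
    apply hS.inv_unique
    · calc e * f * (f * e) * (e * f) = e * (f * f) * (e * e) * f := by simp [mul_assoc]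
        _ = e * f * (e * f) := by rw [hf, he]; simp [mul_assoc]
        _ = e * f := hef
    · calc f * e * (e * f) * (f * e) = f * (e * e) * (f * f) * e := by simp [mul_assoc]
        _ = f * e * (f * e) := by rw [he, hf]; simp [mul_assoc]
        _ = f * e := hfe
  rw [h, ISZ.idem_inv hS hef]

theorem ISZ.idem_mul_inv (a : S) : IsIdem (a * a⁻¹) := by
  show a * a⁻¹ * (a * a⁻¹) = a * a⁻¹
  rw [← hS.mul_assoc, hS.mul_inv_mul]

theorem ISZ.idem_inv_mul (a : S) : IsIdem (a⁻¹ * a) := by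
  show a⁻¹ * a * (a⁻¹ * a) = a⁻¹ * a
  rw [← hS.mul_assoc, hS.inv_mul_inv]

/-- Conjugates of idempotents are idempotents. -/
theorem ISZ.conj_idem (b : S) {e : S} (he : IsIdem e) : IsIdem (b * e * b⁻¹) := by
  letI : Semigroup S := ⟨hS.mul_assoc⟩
  show b * e * b⁻¹ * (b * e * b⁻¹) = b * e * b⁻¹
  calc b * e * b⁻¹ * (b * e * b⁻¹)
      = b * (e * ((b⁻¹ * b) * e)) * b⁻¹ := by simp [mul_assoc]
    _ = b * (e * (e * (b⁻¹ * b))) * b⁻¹ := by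
        rw [ISZ.idem_comm hS (ISZ.idem_inv_mul hS b) he]
    _ = b * ((e * e) * (b⁻¹ * b)) * b⁻¹ := by simp [mul_assoc]
    _ = b * (e * (b⁻¹ * b)) * b⁻¹ := by rw [he]
    _ = b * ((b⁻¹ * b) * e) * b⁻¹ := by
        rw [ISZ.idem_comm hS he (ISZ.idem_inv_mul hS b)]
    _ = (b * b⁻¹ * b) * (e * b⁻¹) := by simp [mul_assoc]
    _ = b * e * b⁻¹ := by rw [hS.mul_inv_mul]; simp [mul_assoc]

/-- `(a b)⁻¹ = b⁻¹ a⁻¹`. -/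
theorem ISZ.mul_inv_rev (a b : S) : (a * b)⁻¹ = b⁻¹ * a⁻¹ := by
  letI : Semigroup S := ⟨hS.mul_assoc⟩
  symm; apply hS.inv_unique
  · calc a * b * (b⁻¹ * a⁻¹) * (a * b)
        = a * ((b * b⁻¹) * (a⁻¹ * a)) * b := by simp [mul_assoc]
      _ = a * ((a⁻¹ * a) * (b * b⁻¹)) * b := by
          rw [ISZ.idem_comm hS (ISZ.idem_mul_inv hS b) (ISZ.idem_inv_mul hS a)]
      _ = (a * a⁻¹ * a) * (b * b⁻¹ * b) := by simp [mul_assoc]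
      _ = a * b := by rw [hS.mul_inv_mul, hS.mul_inv_mul]
  · calc b⁻¹ * a⁻¹ * (a * b) * (b⁻¹ * a⁻¹)
        = b⁻¹ * ((a⁻¹ * a) * (b * b⁻¹)) * a⁻¹ := by simp [mul_assoc]
      _ = b⁻¹ * ((b * b⁻¹) * (a⁻¹ * a)) * a⁻¹ := by
          rw [ISZ.idem_comm hS (ISZ.idem_inv_mul hS a) (ISZ.idem_mul_inv hS b)]
      _ = (b⁻¹ * b * b⁻¹) * (a⁻¹ * a * a⁻¹) := by simp [mul_assoc]
      _ = b⁻¹ * a⁻¹ := by rw [hS.inv_mul_inv, hS.inv_mul_inv]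

/-- If `s ≤ t` then `s s⁻¹ t = s`. -/
theorem ISZ.le_eq (s t : S) (h : natLe s t) : s * s⁻¹ * t = s := by
  letI : Semigroup S := ⟨hS.mul_assoc⟩
  obtain ⟨e, he, rfl⟩ := h
  have h1 : (t * e)⁻¹ = e * t⁻¹ := by
    rw [ISZ.mul_inv_rev hS, ISZ.idem_inv hS he]
  rw [h1]
  calc t * e * (e * t⁻¹) * t
      = t * ((e * e) * (t⁻¹ * t)) := by simp [mul_assoc]
    _ = t * (e * (t⁻¹ * t)) := by rw [he]
    _ = t * ((t⁻¹ * t) * e) := by rw [ISZ.idem_comm hS he (ISZ.idem_inv_mul hS t)]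
    _ = (t * t⁻¹ * t) * e := by simp [mul_assoc]
    _ = t * e := by rw [hS.mul_inv_mul]

/-- Right multiplicativity of the natural order. -/
theorem ISZ.le_mul_right {s t : S} (b : S) (h : natLe s t) : natLe (s * b) (t * b) := by
  letI : Semigroup S := ⟨hS.mul_assoc⟩
  obtain ⟨e, he, rfl⟩ := h
  have hbe : IsIdem (b⁻¹ * e * b) := by
    have h1 := ISZ.conj_idem hS b⁻¹ he
    rwa [ISZ.inv_inv hS] at h1
  refine ⟨b⁻¹ * e * b, hbe, ?_⟩
  symm
  calc t * b * (b⁻¹ * e * b)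
      = t * ((b * b⁻¹) * e) * b := by simp [mul_assoc]
    _ = t * (e * (b * b⁻¹)) * b := by
        rw [ISZ.idem_comm hS (ISZ.idem_mul_inv hS b) he]
    _ = t * e * (b * b⁻¹ * b) := by simp [mul_assoc]
    _ = t * e * b := by rw [hS.mul_inv_mul]

end Aux

/-- If `{a₁,…,aₘ}` covers `a` and `ab ≠ 0`, then `{a₁b,…,aₘb}` covers `ab`. -/
theorem cover_mul_right {S : Type*} [Mul S] [Inv S] [Zero S]
    (hS : InvSemigroupZero S) (a b : S) (C : Finset S)
    (ha : a ≠ 0) (hC : IsCover C a) (hab : a * b ≠ 0) :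
    (∀ c ∈ C, natLe (c * b) (a * b)) ∧
      ∀ x : S, natLe x (a * b) → x ≠ 0 →
        ∃ c ∈ C, ∃ y : S, y ≠ (0 : S) ∧ natLe y x ∧ natLe y (c * b) := by
  letI : Semigroup S := ⟨hS.mul_assoc⟩
  obtain ⟨hCle, hCcov⟩ := hC
  refine ⟨fun c hc => ISZ.le_mul_right hS b (hCle c hc), ?_⟩
  intro x hx hx0
  obtain ⟨e, he, hxe⟩ := hx
  -- `x x⁻¹ (a b) = x`
  have hub : x * x⁻¹ * a * b = x := by
    have h1 := ISZ.le_eq hS x (a * b) ⟨e, he, hxe⟩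
    calc x * x⁻¹ * a * b = x * x⁻¹ * (a * b) := by simp [mul_assoc]
      _ = x := h1
  -- `x x⁻¹ a ≤ a`
  have hua : natLe (x * x⁻¹ * a) a := by
    refine ⟨a⁻¹ * (x * x⁻¹) * a, ?_, ?_⟩
    · have h1 := ISZ.conj_idem hS a⁻¹ (ISZ.idem_mul_inv hS x)
      rwa [ISZ.inv_inv hS] at h1
    · symm
      calc a * (a⁻¹ * (x * x⁻¹) * a)
          = a * ((a⁻¹ * (x * (x⁻¹ * a)))) := by simp [mul_assoc]
        _ = (a * a⁻¹) * (x * x⁻¹) * a := by simp [mul_assoc]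
        _ = (x * x⁻¹) * (a * a⁻¹) * a := by
            rw [ISZ.idem_comm hS (ISZ.idem_mul_inv hS a) (ISZ.idem_mul_inv hS x)]
        _ = (x * x⁻¹) * (a * a⁻¹ * a) := by simp [mul_assoc]
        _ = x * x⁻¹ * a := by rw [hS.mul_inv_mul]
  -- `x x⁻¹ a ≠ 0`
  have hu0 : x * x⁻¹ * a ≠ 0 := by
    intro h
    exact hx0 (by rw [← hub, h, hS.zero_mul])
  obtain ⟨c, hc, y, hy0, hyu, hyc⟩ := hCcov _ hua hu0
  -- key fact: `x b⁻¹ = x x⁻¹ a`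
  have hxinv : x⁻¹ = e * (b⁻¹ * a⁻¹) := by
    rw [hxe, ISZ.mul_inv_rev hS, ISZ.mul_inv_rev hS, ISZ.idem_inv hS he]
  have hf : IsIdem (b * e * b⁻¹) := ISZ.conj_idem hS b he
  have hxb : x * b⁻¹ = x * x⁻¹ * a := by
    symm
    calc x * x⁻¹ * a
        = a * b * e * (e * (b⁻¹ * a⁻¹)) * a := by rw [← hxinv, hxe]
      _ = a * ((b * ((e * e) * b⁻¹)) * (a⁻¹ * a)) := by simp [mul_assoc]
      _ = a * ((b * (e * b⁻¹)) * (a⁻¹ * a)) := by rw [he]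
      _ = a * ((b * e * b⁻¹) * (a⁻¹ * a)) := by simp [mul_assoc]
      _ = a * ((a⁻¹ * a) * (b * e * b⁻¹)) := by
          rw [ISZ.idem_comm hS hf (ISZ.idem_inv_mul hS a)]
      _ = (a * a⁻¹ * a) * (b * e * b⁻¹) := by simp [mul_assoc]
      _ = a * (b * e * b⁻¹) := by rw [hS.mul_inv_mul]
      _ = a * b * e * b⁻¹ := by simp [mul_assoc]
      _ = x * b⁻¹ := by rw [← hxe]
  -- hence `(x x⁻¹ a)(b b⁻¹) = x x⁻¹ a`
  have hubb : x * x⁻¹ * a * (b * b⁻¹) = x * x⁻¹ * a := by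
    rw [← hxb]
    calc x * b⁻¹ * (b * b⁻¹) = x * (b⁻¹ * b * b⁻¹) := by simp [mul_assoc]
      _ = x * b⁻¹ := by rw [hS.inv_mul_inv]
  -- so `y b b⁻¹ = y`, whence `y b ≠ 0`
  have hyb : y * b * b⁻¹ = y := by
    have h1 := ISZ.le_eq hS y (x * x⁻¹ * a) hyu
    calc y * b * b⁻¹
        = y * y⁻¹ * (x * x⁻¹ * a) * b * b⁻¹ := by rw [h1]
      _ = y * y⁻¹ * (x * x⁻¹ * a * (b * b⁻¹)) := by simp [mul_assoc]
      _ = y * y⁻¹ * (x * x⁻¹ * a) := by rw [hubb]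
      _ = y := h1
  refine ⟨c, hc, y * b, ?_, ?_, ISZ.le_mul_right hS b hyc⟩
  · intro h
    exact hy0 (by rw [← hyb, h, hS.zero_mul])
  · have h1 := ISZ.le_mul_right hS b hyu
    rwa [hub] at h1
end
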